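/- Fix a real ω with 2 ≤ ω ≤ 3. Then for every integer k ≥ 2, one has α_k ≤ k. -/

import Mathlib

/-! Write `x_k = k P_k` with `P_k` the product of the factors `f_j = (5 - 2j) + (j - 2)ω`.
For `2 ≤ ω ≤ 3` every factor lies in `[1, j - 1]`, so `P_k ≥ 1` and
`P_{m+1} = P_m f_{m+1} ≤ m P_m = x_m`. All terms of `y_{m+1}` are nonnegative and its last
summand is `x_m` itself, hence `P_k ≤ y_k`, i.e. `x_k ≤ k y_k`. -/

/-- `x_k = k * ∏_{j=2}^{k} ((5-2j)+(j-2)ω)`. -/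
noncomputable def xk (ω : ℝ) (k : ℕ) : ℝ :=
  (k : ℝ) * ∏ j ∈ Finset.Icc 2 k, ((5 - 2 * (j : ℝ)) + ((j : ℝ) - 2) * ω)

/-- `y_k = (3-ω)^{k-2} + ∑_{j=2}^{k-1} (3-ω)^{k-1-j} x_j`. -/
noncomputable def yk (ω : ℝ) (k : ℕ) : ℝ :=
  (3 - ω) ^ (k - 2) + ∑ j ∈ Finset.Icc 2 (k - 1), (3 - ω) ^ (k - 1 - j) * xk ω j

/-- `α_k = x_k / y_k`. -/
noncomputable def alphak (ω : ℝ) (k : ℕ) : ℝ := xk ω k / yk ω k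

noncomputable def xkFactor (ω : ℝ) (j : ℕ) : ℝ := (5 - 2 * (j : ℝ)) + ((j : ℝ) - 2) * ω

noncomputable def xkProd (ω : ℝ) (k : ℕ) : ℝ := ∏ j ∈ Finset.Icc 2 k, xkFactor ω j

section

variable {ω : ℝ}

lemma xk_eq_mul_xkProd (k : ℕ) : xk ω k = k * xkProd ω k := rfl

lemma one_le_xkFactor (hω : 2 ≤ ω) {j : ℕ} (hj : 2 ≤ j) : 1 ≤ xkFactor ω j := by
  have hj' : (2 : ℝ) ≤ j := by exact_mod_cast hj
  unfold xkFactor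
  nlinarith

lemma xkFactor_succ_le (hω : ω ≤ 3) {m : ℕ} (hm : 1 ≤ m) : xkFactor ω (m + 1) ≤ m := by
  have hm' : (1 : ℝ) ≤ m := by exact_mod_cast hm
  unfold xkFactor
  push_cast
  nlinarith

lemma one_le_xkProd (hω : 2 ≤ ω) (k : ℕ) : 1 ≤ xkProd ω k :=
  Finset.one_le_prod fun _ hj => one_le_xkFactor hω (Finset.mem_Icc.mp hj).1

lemma xk_nonneg (hω : 2 ≤ ω) (k : ℕ) : 0 ≤ xk ω k := by
  rw [xk_eq_mul_xkProd]
  have := one_le_xkProd hω k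
  positivity

lemma xkProd_succ_le_xk (hω2 : 2 ≤ ω) (hω3 : ω ≤ 3) {m : ℕ} (hm : 1 ≤ m) :
    xkProd ω (m + 1) ≤ xk ω m := by
  rw [xkProd, Finset.prod_Icc_succ_top (by omega), ← xkProd, xk_eq_mul_xkProd, mul_comm]
  exact mul_le_mul_of_nonneg_right (xkFactor_succ_le hω3 hm)
    (zero_le_one.trans (one_le_xkProd hω2 m))

lemma xk_le_yk_succ (hω2 : 2 ≤ ω) (hω3 : ω ≤ 3) {m : ℕ} (hm : 2 ≤ m) :
    xk ω m ≤ yk ω (m + 1) := by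
  have h3ω : 0 ≤ 3 - ω := by linarith
  have hlast : (3 - ω) ^ (m - m) * xk ω m ≤ ∑ j ∈ Finset.Icc 2 m, (3 - ω) ^ (m - j) * xk ω j :=
    Finset.single_le_sum (f := fun j => (3 - ω) ^ (m - j) * xk ω j)
      (fun j _ => mul_nonneg (pow_nonneg h3ω _) (xk_nonneg hω2 j))
      (Finset.mem_Icc.mpr ⟨hm, le_rfl⟩)
  rw [Nat.sub_self, pow_zero, one_mul] at hlast
  rw [yk, Nat.add_sub_cancel]
  linarith [pow_nonneg h3ω (m + 1 - 2)]

lemma xkProd_le_yk (hω2 : 2 ≤ ω) (hω3 : ω ≤ 3) {k : ℕ} (hk : 2 ≤ k) :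
    xkProd ω k ≤ yk ω k := by
  obtain rfl | ⟨m, hm, rfl⟩ : k = 2 ∨ ∃ m, 2 ≤ m ∧ k = m + 1 :=
    hk.eq_or_lt.imp Eq.symm fun h => ⟨k - 1, by omega, by omega⟩
  · norm_num [xkProd, xkFactor, yk]
  · exact (xkProd_succ_le_xk hω2 hω3 (by omega)).trans (xk_le_yk_succ hω2 hω3 hm)

end

theorem alphak_upper_bound (ω : ℝ) (hω2 : 2 ≤ ω) (hω3 : ω ≤ 3) (k : ℕ) (hk : 2 ≤ k) :
    alphak ω k ≤ (k : ℝ) := by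
  have hP := xkProd_le_yk hω2 hω3 hk
  have hy : 0 ≤ yk ω k := zero_le_one.trans ((one_le_xkProd hω2 k).trans hP)
  refine div_le_of_le_mul₀ hy k.cast_nonneg ?_
  rw [xk_eq_mul_xkProd]
  exact mul_le_mul_of_nonneg_left hP k.cast_nonneg
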